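/- Let Q be a polynomial in the ring R = ℂ[xE4, xE6, xa2, xa3, xa4, xb1, xb2, xb3, xb4, xb5, xb6] that is bihomogeneous with respect to the (weight, index) bigrading, i.e., every monomial appearing in Q has the same total weight and the same total index, where the bidegrees of the variables are: xE4 ↦ (4, 0), xE6 ↦ (6, 0), xa2 ↦ (−8, 2), xa3 ↦ (−14, 3), xa4 ↦ (−20, 4), xb1 ↦ (0, 1), xb2 ↦ (−6, 2), xb3 ↦ (−12, 3), xb4 ↦ (−18, 4), xb5 ↦ (−24, 5), xb6 ↦ (−30, 6). Let φ : R → ℂ[w1, ..., w8] be the ℂ-algebra homomorphism determined by φ(xE4) = 1, φ(xE6) = 1, φ(xb1) = −4, φ(xa2) = a2_0, φ(xa3) = a3_0, φ(xa4) = a4_0, φ(xb2) = b2_0, φ(xb3) = b3_0, φ(xb4) = b4_0, φ(xb5) = b5_0, φ(xb6) = b6_0. If φ(Q) = 0, then the polynomial xE4^3 − xE6^2 divides Q in R. -/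

import Mathlib

/-!
Trading every `xE6 ^ 2` in `Q` for `xE4 ^ 3` changes `Q` by a multiple of `xE4 ^ 3 - xE6 ^ 2`
and produces a polynomial `Q'`, of degree at most one in `xE6`, that is still bihomogeneous
because `xE4 ^ 3` and `xE6 ^ 2` have the same bidegree. The constant terms `a2_0, …, b6_0` are
algebraically independent: an explicit polynomial map `ψ` inverts the coordinate change
`(w1, …, w8) ↦ (a2_0, …, b6_0)`. Applying `ψ` to `φ Q = 0` shows that `Q`, hence also `Q'`,
vanishes when `xE4, xE6, xb1` are specialized to `1, 1, -4` and the other variables are kept.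
On the monomials of `Q'` this specialization is injective: the index recovers the exponent
of `xb1`, and the weight recovers `4 e₄ + 6 e₆`, hence `(e₄, e₆)` once `e₆ ≤ 1`. So `Q' = 0`.
-/

noncomputable section

namespace E8JacobiQ0

open MvPolynomial

/-- The polynomial ring `ℂ[w1, ..., w8]`; the variable `wⱼ` is `X (j-1)`. -/
abbrev Cw : Type := MvPolynomial (Fin 8) ℂ

def w1 : Cw := X 0
def w2 : Cw := X 1
def w3 : Cw := X 2
def w4 : Cw := X 3
def w5 : Cw := X 4
def w6 : Cw := X 5
def w7 : Cw := X 6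
def w8 : Cw := X 7

def a2_0 : Cw := C (-(2/3) : ℂ) * w1 + 12 * w8 - 1440
def a3_0 : Cw := -2 * w2 + 96 * w1 - 1152 * w8 + 103680
def a4_0 : Cw := C ((4/3) : ℂ) * w1^2 - 4 * w3 - 16 * w6 - 48 * w1 * w8
  - 144 * w8^2 + 400 * w2 + 1440 * w7 + 1728 * w1 + 41472 * w8 - 2073600
def b2_0 : Cw := C (-(1/18) : ℂ) * w1 - 3 * w8 + 840
def b3_0 : Cw := C (-(1/6) : ℂ) * w2 - 4 * w7 - 8 * w1 + 528 * w8 - 79680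
def b4_0 : Cw := C ((2/9) : ℂ) * w1^2 - C ((1/3) : ℂ) * w3 - C ((16/3) : ℂ) * w6
  - 24 * w1 * w8 - 120 * w8^2 + C ((424/3) : ℂ) * w2 + 1272 * w7 + 4608 * w1
  - 25920 * w8 + 3939840
def b5_0 : Cw := C ((2/3) : ℂ) * w1 * w2 - 4 * w5 - 16 * w1 * w7 + 64 * w2 * w8
  + 288 * w7 * w8 - 96 * w1^2 - 60 * w3 - 160 * w6 + 3456 * w8^2 + 800 * w2
  - 24480 * w7 - 108480 * w1 + 933120 * w8 - 97873920
def b6_0 : Cw := C (-(8/27) : ℂ) * w1^3 + w2^2 + C ((4/3) : ℂ) * w1 * w3 - 4 * w4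
  - C ((32/3) : ℂ) * w1 * w6 - 48 * w1^2 * w8 + 48 * w2 * w7 + 288 * w7^2
  - 40 * w3 * w8 - 480 * w6 * w8 - 2592 * w1 * w8^2 - 9792 * w8^3
  + C ((1124/3) : ℂ) * w1 * w2 + 548 * w5 + 6688 * w1 * w7 + 1884 * w2 * w8
  + 25632 * w7 * w8 + 24576 * w1^2 + 12920 * w3 + 88320 * w6
  + 578688 * w1 * w8 + 1714176 * w8^2 - 1694400 * w2 - 8460000 * w7
  - 30102720 * w1 - 104198400 * w8 + 721612800

/-- The polynomial ring `R = ℂ[xE4, xE6, xa2, xa3, xa4, xb1, xb2, xb3, xb4, xb5, xb6]`,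
with variables in that order. -/
abbrev R : Type := MvPolynomial (Fin 11) ℂ

/-- The (weight, index) bidegrees of the variables
`xE4, xE6, xa2, xa3, xa4, xb1, xb2, xb3, xb4, xb5, xb6`. -/
def bideg : Fin 11 → ℤ × ℤ :=
  ![(4, 0), (6, 0), (-8, 2), (-14, 3), (-20, 4), (0, 1),
    (-6, 2), (-12, 3), (-18, 4), (-24, 5), (-30, 6)]

/-- The ℂ-algebra homomorphism `φ : R → ℂ[w1, ..., w8]` sending `xE4 ↦ 1`, `xE6 ↦ 1`,
`xa2 ↦ a2_0`, `xa3 ↦ a3_0`, `xa4 ↦ a4_0`, `xb1 ↦ −4`, `xb2 ↦ b2_0`, `xb3 ↦ b3_0`,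
`xb4 ↦ b4_0`, `xb5 ↦ b5_0`, `xb6 ↦ b6_0`. -/
def φ : R →ₐ[ℂ] Cw :=
  MvPolynomial.aeval
    ![1, 1, a2_0, a3_0, a4_0, -4, b2_0, b3_0, b4_0, b5_0, b6_0]

end E8JacobiQ0

namespace Finsupp

theorem update_mod_two_add_single {σ : Type*} (j : σ) (d : σ →₀ ℕ) :
    d.update j (d j % 2) + single j (2 * (d j / 2)) = d := by
  classical
  ext k
  by_cases hk : k = j
  · subst hk
    simp only [coe_add, coe_update, Pi.add_apply, Function.update_self, single_eq_same]
    omega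
  · simp [hk]

end Finsupp

namespace MvPolynomial

section CommSemiring

variable {σ A : Type*} [CommSemiring A]

-- The exponent of `X ^ d` reduced modulo `X i ^ 3 = X j ^ 2`: each `X j ^ 2` becomes `X i ^ 3`.
def cuspReduce (i j : σ) (d : σ →₀ ℕ) : σ →₀ ℕ :=
  d.update j (d j % 2) + Finsupp.single i (3 * (d j / 2))

def cuspReduction (i j : σ) (P : MvPolynomial σ A) : MvPolynomial σ A :=
  ∑ d ∈ P.support, monomial (cuspReduce i j d) (coeff d P)

theorem weight_cuspReduce {M : Type*} [AddCommMonoid M] {w : σ → M} {i j : σ}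
    (hw : 3 • w i = 2 • w j) (d : σ →₀ ℕ) :
    Finsupp.weight w (cuspReduce i j d) = Finsupp.weight w d := by
  conv_rhs => rw [← Finsupp.update_mod_two_add_single j d]
  rw [cuspReduce, map_add, map_add, Finsupp.weight_single, Finsupp.weight_single, mul_comm,
    mul_smul, hw, ← mul_smul, mul_comm]

theorem IsWeightedHomogeneous.cuspReduction {M : Type*} [AddCommMonoid M] {w : σ → M}
    {i j : σ} {m : M} {P : MvPolynomial σ A} (hw : 3 • w i = 2 • w j)
    (hP : P.IsWeightedHomogeneous w m) : (cuspReduction i j P).IsWeightedHomogeneous w m :=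
  IsWeightedHomogeneous.sum _ _ _ fun d hd =>
    isWeightedHomogeneous_monomial _ _ _
      ((weight_cuspReduce hw d).trans (hP (mem_support_iff.mp hd)))

theorem lt_two_of_mem_support_cuspReduction {i j : σ} (hij : i ≠ j) {P : MvPolynomial σ A}
    {d : σ →₀ ℕ} (hd : d ∈ (cuspReduction i j P).support) : d j < 2 := by
  classical
  obtain ⟨e, -, he⟩ := Finset.mem_biUnion.mp (support_sum hd)
  rw [Finset.mem_singleton.mp (support_monomial_subset he), cuspReduce]
  simp only [Finsupp.coe_add, Finsupp.coe_update, Pi.add_apply, Function.update_self,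
    Finsupp.single_eq_of_ne' hij, add_zero]
  omega

theorem eq_zero_of_map_monomial_injOn {τ F : Type*} [NoZeroDivisors A]
    [FunLike F (MvPolynomial σ A) (MvPolynomial τ A)]
    [AddMonoidHomClass F (MvPolynomial σ A) (MvPolynomial τ A)] (f : F)
    (e : (σ →₀ ℕ) → (τ →₀ ℕ)) (u : (σ →₀ ℕ) → A) (hu : ∀ d, u d ≠ 0)
    (hf : ∀ d c, f (monomial d c) = monomial (e d) (u d * c)) {P : MvPolynomial σ A}
    (he : Set.InjOn e P.support) (hP : f P = 0) : P = 0 := by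
  classical
  ext d₀
  rw [coeff_zero]
  by_contra h
  have hd₀ : d₀ ∈ P.support := mem_support_iff.mpr h
  have hcoeff : coeff (e d₀) (f P) = u d₀ * coeff d₀ P := by
    conv_lhs => rw [← P.support_sum_monomial_coeff]
    rw [map_sum, coeff_sum, Finset.sum_eq_single d₀]
    · rw [hf, coeff_monomial, if_pos rfl]
    · intro d hd hne
      rw [hf, coeff_monomial, if_neg fun h => hne (he hd hd₀ h)]
    · exact fun h' => absurd hd₀ h'
  rw [hP, coeff_zero] at hcoeff
  exact mul_ne_zero (hu d₀) h hcoeff.symm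

end CommSemiring

section CommRing

variable {σ A : Type*} [CommRing A]

theorem X_pow_three_sub_X_pow_two_dvd_monomial_sub (i j : σ) (d : σ →₀ ℕ) (a : A) :
    (X i ^ 3 - X j ^ 2 : MvPolynomial σ A) ∣ monomial d a - monomial (cuspReduce i j d) a := by
  have hd : monomial d a = monomial (d.update j (d j % 2)) a * (X j ^ 2) ^ (d j / 2) := by
    rw [← pow_mul, X_pow_eq_monomial, monomial_mul, mul_one, Finsupp.update_mod_two_add_single]
  have hr : monomial (cuspReduce i j d) a =
      monomial (d.update j (d j % 2)) a * (X i ^ 3) ^ (d j / 2) := by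
    rw [← pow_mul, X_pow_eq_monomial, monomial_mul, mul_one, cuspReduce]
  rw [hd, hr, ← mul_sub]
  exact (dvd_sub_comm.mp (sub_dvd_pow_sub_pow _ _ _)).mul_left _

theorem X_pow_three_sub_X_pow_two_dvd_sub_cuspReduction (i j : σ) (P : MvPolynomial σ A) :
    (X i ^ 3 - X j ^ 2 : MvPolynomial σ A) ∣ P - cuspReduction i j P := by
  have hP : P - cuspReduction i j P =
      ∑ d ∈ P.support, (monomial d (coeff d P) - monomial (cuspReduce i j d) (coeff d P)) := by
    rw [Finset.sum_sub_distrib, support_sum_monomial_coeff, cuspReduction]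
  rw [hP]
  exact Finset.dvd_sum fun d _ => X_pow_three_sub_X_pow_two_dvd_monomial_sub i j d _

end CommRing

end MvPolynomial

namespace E8JacobiQ0

open MvPolynomial

def specialization : R →ₐ[ℂ] R :=
  aeval ![1, 1, X 2, X 3, X 4, -4, X 6, X 7, X 8, X 9, X 10]

-- `ψ` inverts the coordinate change `(w1, …, w8) ↦ (a2_0, a3_0, a4_0, b2_0, …, b6_0)`.
def ψ : Cw →ₐ[ℂ] R :=
  aeval ![
    (-C (9/8 : ℂ) * X 2 - C (9/2 : ℂ) * X 6 + 2160 : R),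
    (-66 * X 2 - C (1/2 : ℂ) * X 3 - 72 * X 6 + 17280 : R),
    (C (1/8 : ℂ) * X 2 ^ 2 + 3 * X 2 * X 6 - 2406 * X 2 - C (25/2 : ℂ) * X 3
      - C (1/3 : ℂ) * X 4 + 18 * X 6 ^ 2 - 504 * X 6 + 198 * X 7 + X 8 + 69120 : R),
    (C (31/384 : ℂ) * X 2 ^ 3 + C (35/32 : ℂ) * X 2 ^ 2 * X 6 - C (6975/8 : ℂ) * X 2 ^ 2
      - C (115/96 : ℂ) * X 2 * X 3 + C (59/288 : ℂ) * X 2 * X 4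
      + C (75/8 : ℂ) * X 2 * X 6 ^ 2 - 4305 * X 2 * X 6 - C (9/8 : ℂ) * X 2 * X 7
      - C (17/24 : ℂ) * X 2 * X 8 - 286650 * X 2 - C (1/32 : ℂ) * X 3 ^ 2
      + C (1123/8 : ℂ) * X 3 * X 6 + C (3/4 : ℂ) * X 3 * X 7 - C (112035/2 : ℂ) * X 3
      + C (13/24 : ℂ) * X 4 * X 6 - C (1235/6 : ℂ) * X 4 + C (45/2 : ℂ) * X 6 ^ 3
      + 5130 * X 6 ^ 2 + C (855/2 : ℂ) * X 6 * X 7 - C (19/2 : ℂ) * X 6 * X 8 - 7560 * X 6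
      + C (9/2 : ℂ) * X 7 ^ 2 + 54450 * X 7 + 3985 * X 8 - C (137/4 : ℂ) * X 9
      - C (1/4 : ℂ) * X 10 + 483840 : R),
    (-C (5/8 : ℂ) * X 2 ^ 2 + C (5/96 : ℂ) * X 2 * X 3 - 105 * X 2 * X 6
      - C (3/2 : ℂ) * X 2 * X 7 - 21750 * X 2 + C (19/8 : ℂ) * X 3 * X 6 - 1660 * X 3
      + C (25/6 : ℂ) * X 4 - 90 * X 6 ^ 2 - 2520 * X 6 - 720 * X 7 - 5 * X 8
      - C (1/4 : ℂ) * X 9 + 241920 : R),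
    (C (9/64 : ℂ) * X 2 ^ 2 - C (3/8 : ℂ) * X 2 * X 6 - C (477/2 : ℂ) * X 2
      - C (15/2 : ℂ) * X 3 + C (1/48 : ℂ) * X 4 - C (27/4 : ℂ) * X 6 ^ 2 - 378 * X 6
      - 72 * X 7 - C (1/4 : ℂ) * X 8 + 60480 : R),
    (C (31/4 : ℂ) * X 2 + C (1/48 : ℂ) * X 3 - 21 * X 6 - C (1/4 : ℂ) * X 7 + 6720 : R),
    (C (1/48 : ℂ) * X 2 - C (1/4 : ℂ) * X 6 + 240 : R)]

theorem ψ_comp_φ : ψ.comp φ = specialization := by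
  refine algHom_ext fun i => MvPolynomial.funext fun x => ?_
  fin_cases i <;>
    simp only [Fin.reduceFinMk, AlgHom.comp_apply, φ, ψ, specialization, aeval_X, Matrix.cons_val,
      a2_0, a3_0, a4_0, b2_0, b3_0, b4_0, b5_0, b6_0, w1, w2, w3, w4, w5, w6, w7, w8, map_add,
      map_sub, map_mul, map_neg, map_ofNat, map_one, map_pow, aeval_C, algebraMap_eq, eval_C,
      eval_X] <;>
    ring

def eraseE4E6b1 (d : Fin 11 →₀ ℕ) : Fin 11 →₀ ℕ :=
  d.filter fun i => i ≠ 0 ∧ i ≠ 1 ∧ i ≠ 5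

theorem specialization_monomial (d : Fin 11 →₀ ℕ) (c : ℂ) :
    specialization (monomial d c) = monomial (eraseE4E6b1 d) ((-4) ^ d 5 * c) := by
  simp only [specialization, aeval_eq_bind₁, monomial_eq, pow_zero, implies_true,
    Finsupp.prod_fintype, Fin.prod_univ_succ, Fin.succ_zero_eq_one, Fin.succ_one_eq_two,
    Fin.reduceSucc, Finset.univ_unique, Fin.default_eq_zero, Finset.prod_singleton, map_mul,
    algHom_C, algebraMap_eq, map_pow, bind₁_X_right, Matrix.cons_val_zero, one_pow,
    Matrix.cons_val_one, Matrix.cons_val, one_mul, eraseE4E6b1, ne_eq, map_neg,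
    map_ofNat, not_true_eq_false, zero_ne_one, not_false_eq_true, Fin.reduceEq, and_self,
    and_true, Finsupp.filter_apply_neg, one_ne_zero, and_false, Finsupp.filter_apply_pos]
  ring

theorem eq_of_eraseE4E6b1_eq {d d' : Fin 11 →₀ ℕ}
    (hw : Finsupp.weight bideg d = Finsupp.weight bideg d') (hd : d 1 < 2) (hd' : d' 1 < 2)
    (he : eraseE4E6b1 d = eraseE4E6b1 d') : d = d' := by
  have hcoord (i : Fin 11) (h0 : i ≠ 0) (h1 : i ≠ 1) (h5 : i ≠ 5) : d i = d' i := by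
    simpa [eraseE4E6b1, h0, h1, h5] using DFunLike.congr_fun he i
  obtain ⟨h2, h3, h4, h6, h7, h8, h9, h10⟩ : d 2 = d' 2 ∧ d 3 = d' 3 ∧ d 4 = d' 4 ∧
      d 6 = d' 6 ∧ d 7 = d' 7 ∧ d 8 = d' 8 ∧ d 9 = d' 9 ∧ d 10 = d' 10 := by
    refine ⟨?_, ?_, ?_, ?_, ?_, ?_, ?_, ?_⟩ <;>
      exact hcoord _ (by decide) (by decide) (by decide)
  have hW := congrArg Prod.fst hw
  have hI := congrArg Prod.snd hw
  simp only [bideg, Int.reduceNeg, Finsupp.weight_eq_sum, nsmul_eq_mul, Fin.sum_univ_succ,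
    Matrix.cons_val_zero, Matrix.cons_val_succ, Fin.succ_zero_eq_one, Fin.succ_one_eq_two,
    Fin.reduceSucc, Finset.univ_unique, Fin.default_eq_zero, Matrix.cons_val_fin_one,
    Finset.sum_singleton, Prod.fst_add, Prod.fst_mul, Prod.fst_natCast, mul_neg, mul_zero, zero_add,
    Prod.snd_add, Prod.snd_mul, Prod.snd_natCast, mul_one] at hW hI
  ext i
  fin_cases i <;> simp only [Fin.zero_eta, Fin.mk_one, Fin.reduceFinMk] <;> omega

theorem eq_zero_of_specialization_eq_zero {P : R} {km : ℤ × ℤ}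
    (hP : P.IsWeightedHomogeneous bideg km) (hP₁ : ∀ d ∈ P.support, d 1 < 2)
    (h : specialization P = 0) : P = 0 :=
  eq_zero_of_map_monomial_injOn specialization eraseE4E6b1 (fun d => (-4) ^ d 5)
    (fun _ => pow_ne_zero _ (by norm_num)) specialization_monomial
    (fun d hd d' hd' he => eq_of_eraseE4E6b1_eq
      ((hP (mem_support_iff.mp hd)).trans (hP (mem_support_iff.mp hd')).symm)
      (hP₁ d hd) (hP₁ d' hd') he)
    h

theorem dvd_of_bihomogeneous_relation (Q : R)
    (hbihom : ∃ km : ℤ × ℤ, Q.IsWeightedHomogeneous bideg km)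
    (hker : φ Q = 0) :
    (MvPolynomial.X 0 ^ 3 - MvPolynomial.X 1 ^ 2 : R) ∣ Q := by
  obtain ⟨km, hQ⟩ := hbihom
  have hdvd := X_pow_three_sub_X_pow_two_dvd_sub_cuspReduction 0 1 Q
  have hspec : specialization (cuspReduction 0 1 Q) = 0 := by
    obtain ⟨c, hc⟩ := hdvd
    have hQ₀ : specialization Q = 0 := by rw [← ψ_comp_φ, AlgHom.comp_apply, hker, map_zero]
    have hcusp : specialization (X 0 ^ 3 - X 1 ^ 2 : R) = 0 := by simp [specialization]
    simpa [hQ₀, hcusp] using congrArg specialization hc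
  have hzero : cuspReduction 0 1 Q = 0 :=
    eq_zero_of_specialization_eq_zero (hQ.cuspReduction (by decide))
      (fun _ => lt_two_of_mem_support_cuspReduction (by decide)) hspec
  rwa [hzero, sub_zero] at hdvd

end E8JacobiQ0
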